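/- For s ∈ (0,1/2), the shifted partial integral satisfies lim_{s→0⁺} ( ∫_s^{1/2} (u·(u−s)·(1−u))^{−1/2} du + log s ) = c, where c = ∫₀^{1/2} t^{−1}·((1−t)^{−1/2} − 1) dt + ∫₁^∞ t^{−1/2}·((t−1)^{−1/2} − t^{−1/2}) dt − log 2; both integrals defining c are finite. -/

import Mathlib

/-!
Write `(1 - u)^{-1/2} = 1 + g(u)` with `0 ≤ g(u) ≤ u` on `[0, 1/2]`. The part of the integral
without `g` has the elementary primitive `2 log (√u + √(u - s))`, so together with `log s` it
equals `2 log (√(1/2) + √(1/2 - s)) → log 2`. In the part with `g` the factor `g(u)/√u ≤ √u` is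
bounded, so after the shift `u = v + s` dominated convergence (with dominant `v^{-1/2}`) gives the
limit `∫₀^{1/2} g(t)/t dt`. Finally `2 log (√t + √(t - 1)) - log t` is a primitive of the
integrand on `(1, ∞)`, which is nonnegative, hence integrable with integral `2 log 2`.
-/

open MeasureTheory Set Real Filter Topology

lemma rpow_neg_half_eq_inv_sqrt {x : ℝ} (hx : 0 ≤ x) : x ^ (-(1/2 : ℝ)) = (√x)⁻¹ := by
  rw [rpow_neg hx, sqrt_eq_rpow]

lemma one_le_one_sub_rpow_neg_half {u : ℝ} (h0 : 0 ≤ u) (h1 : u < 1) :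
    1 ≤ (1 - u) ^ (-(1/2 : ℝ)) :=
  one_le_rpow_of_pos_of_le_one_of_nonpos (by linarith) (by linarith) (by norm_num)

lemma one_sub_rpow_neg_half_le_one_add {u : ℝ} (h0 : 0 ≤ u) (h : u ≤ 1/2) :
    (1 - u) ^ (-(1/2 : ℝ)) ≤ 1 + u := by
  rw [rpow_neg_half_eq_inv_sqrt (by linarith),
    inv_le_comm₀ (sqrt_pos.2 (by linarith)) (by positivity), le_sqrt' (by positivity), inv_pow,
    inv_le_iff_one_le_mul₀ (by positivity)]
  nlinarith [mul_nonneg h0 (mul_nonneg h0 h0)]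

lemma integrableOn_inv_mul_one_sub_rpow_neg_half_sub_one :
    IntegrableOn (fun t : ℝ => t⁻¹ * ((1 - t) ^ (-(1/2 : ℝ)) - 1)) (Ioo 0 (1/2)) := by
  refine Measure.integrableOn_of_bounded (M := 1) (by simp) (by fun_prop) ?_
  filter_upwards [ae_restrict_mem measurableSet_Ioo] with t ⟨ht0, ht⟩
  have hg0 := one_le_one_sub_rpow_neg_half ht0.le (by linarith)
  have hg1 := one_sub_rpow_neg_half_le_one_add ht0.le ht.le
  rw [norm_of_nonneg (by positivity), inv_mul_le_iff₀ ht0]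
  linarith

lemma abs_rpow_neg_half_mul_one_sub_rpow_neg_half_sub_one_le_one {u : ℝ} (h0 : 0 < u)
    (h : u ≤ 1/2) : |u ^ (-(1/2 : ℝ)) * ((1 - u) ^ (-(1/2 : ℝ)) - 1)| ≤ 1 := by
  have hg0 := one_le_one_sub_rpow_neg_half h0.le (by linarith)
  have hg1 := one_sub_rpow_neg_half_le_one_add h0.le h
  rw [abs_of_nonneg (mul_nonneg (rpow_nonneg h0.le _) (by linarith))]
  calc u ^ (-(1/2 : ℝ)) * ((1 - u) ^ (-(1/2 : ℝ)) - 1) ≤ u ^ (-(1/2 : ℝ)) * u :=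
        mul_le_mul_of_nonneg_left (by linarith) (rpow_nonneg h0.le _)
    _ = √u := by rw [rpow_neg_half_eq_inv_sqrt h0.le, inv_mul_eq_div, div_sqrt]
    _ ≤ 1 := sqrt_le_one.2 (by linarith)

lemma integrableOn_sub_rpow_neg_half (a b : ℝ) :
    IntegrableOn (fun x : ℝ => (x - a) ^ (-(1/2 : ℝ))) (Ioo a b) := by
  have := (intervalIntegral.intervalIntegrable_rpow' (r := -(1/2 : ℝ)) (by norm_num)
    (a := a - a) (b := b - a)).comp_sub_right a
  simp only [sub_add_cancel] at this
  exact this.1.mono_set Ioo_subset_Ioc_self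

lemma hasDerivAt_two_mul_log_sqrt_add_sqrt_sub {s x : ℝ} (hs : 0 ≤ s) (hx : s < x) :
    HasDerivAt (fun u => 2 * log (√u + √(u - s))) ((x * (x - s)) ^ (-(1/2 : ℝ))) x := by
  have hx0 : 0 < x := hs.trans_lt hx
  have hxs : 0 < x - s := sub_pos.2 hx
  have hx0' : 0 < √x := sqrt_pos.2 hx0
  have hxs' : 0 < √(x - s) := sqrt_pos.2 hxs
  have hlog := ((((hasDerivAt_id' x).sqrt hx0.ne').add
    (((hasDerivAt_id' x).sub_const s).sqrt hxs.ne')).log (add_pos hx0' hxs').ne').const_mul 2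
  refine hlog.congr_deriv ?_
  simp only [Pi.add_apply]
  rw [rpow_neg_half_eq_inv_sqrt (by positivity), sqrt_mul hx0.le]
  field_simp
  ring

lemma continuousOn_log_sqrt_add_sqrt_sub {s b : ℝ} (hs : 0 < s) :
    ContinuousOn (fun u => log (√u + √(u - s))) (Icc s b) := by
  refine (continuous_sqrt.add (continuous_sqrt.comp (continuous_sub_right s))).continuousOn.log
    fun u hu => ?_
  have : 0 < √u := sqrt_pos.2 (hs.trans_le hu.1)
  exact (add_pos_of_pos_of_nonneg this (sqrt_nonneg _)).ne'

lemma integrableOn_mul_sub_rpow_neg_half {s b : ℝ} (hs : 0 < s) :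
    IntegrableOn (fun u => (u * (u - s)) ^ (-(1/2 : ℝ))) (Ioo s b) :=
  (intervalIntegral.integrableOn_deriv_of_nonneg
    ((continuousOn_log_sqrt_add_sqrt_sub hs).const_smul (2 : ℝ))
    (fun _ hx => hasDerivAt_two_mul_log_sqrt_add_sqrt_sub hs.le hx.1)
    (fun _ hx => rpow_nonneg (mul_nonneg (hs.trans hx.1).le (sub_pos.2 hx.1).le) _)).mono_set
    Ioo_subset_Ioc_self

lemma integral_Ioo_mul_sub_rpow_neg_half {s b : ℝ} (hs : 0 < s) (hsb : s ≤ b) :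
    ∫ u in Ioo s b, (u * (u - s)) ^ (-(1/2 : ℝ)) = 2 * log (√b + √(b - s)) - log s := by
  rw [← integral_Ioc_eq_integral_Ioo, ← intervalIntegral.integral_of_le hsb,
    intervalIntegral.integral_eq_sub_of_hasDerivAt_of_le hsb
      ((continuousOn_log_sqrt_add_sqrt_sub hs).const_smul (2 : ℝ))
      (fun _ hx => hasDerivAt_two_mul_log_sqrt_add_sqrt_sub hs.le hx.1)
      ((intervalIntegrable_iff_integrableOn_Ioo_of_le hsb).2
        (integrableOn_mul_sub_rpow_neg_half hs))]
  simp only [Pi.smul_apply, smul_eq_mul, sub_self, sqrt_zero, add_zero, log_sqrt hs.le]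
  ring

lemma hasDerivAt_two_mul_log_sqrt_add_sqrt_sub_one_sub_log {t : ℝ} (ht : 1 < t) :
    HasDerivAt (fun t => 2 * log (√t + √(t - 1)) - log t)
      (t ^ (-(1/2 : ℝ)) * ((t - 1) ^ (-(1/2 : ℝ)) - t ^ (-(1/2 : ℝ)))) t := by
  have ht0 : 0 < t := one_pos.trans ht
  refine ((hasDerivAt_two_mul_log_sqrt_add_sqrt_sub zero_le_one ht).sub
    (hasDerivAt_log ht0.ne')).congr_deriv ?_
  rw [eq_comm, mul_sub, ← mul_rpow ht0.le (by linarith), ← rpow_add ht0]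
  norm_num [rpow_neg_one]

lemma tendsto_two_mul_log_sqrt_add_sqrt_sub_one_sub_log :
    Tendsto (fun t => 2 * log (√t + √(t - 1)) - log t) atTop (𝓝 (2 * log 2)) := by
  have hlim : Tendsto (fun t : ℝ => 2 * log (1 + √(1 - t⁻¹))) atTop (𝓝 (2 * log 2)) := by
    have := ((tendsto_inv_atTop_zero.const_sub 1).sqrt.const_add 1).log (by norm_num)
      |>.const_mul 2
    norm_num at this
    exact this
  refine hlim.congr' ?_
  filter_upwards [eventually_gt_atTop 1] with t ht
  have ht0 : 0 < t := one_pos.trans ht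
  have hfactor : √t + √(t - 1) = √t * (1 + √(1 - t⁻¹)) := by
    rw [mul_add, mul_one, ← sqrt_mul ht0.le, mul_sub, mul_inv_cancel₀ ht0.ne', mul_one]
  rw [hfactor, log_mul (by positivity) (by positivity), log_sqrt ht0.le]
  ring

lemma rpow_neg_half_mul_sub_rpow_neg_half_nonneg {t : ℝ} (ht : 1 < t) :
    0 ≤ t ^ (-(1/2 : ℝ)) * ((t - 1) ^ (-(1/2 : ℝ)) - t ^ (-(1/2 : ℝ))) :=
  mul_nonneg (rpow_nonneg (by linarith) _)
    (sub_nonneg.2 (rpow_le_rpow_of_nonpos (by linarith) (by linarith) (by norm_num)))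

lemma continuousAt_two_mul_log_sqrt_add_sqrt_sub_one_sub_log :
    ContinuousAt (fun t => 2 * log (√t + √(t - 1)) - log t) 1 := by
  fun_prop (disch := norm_num)

lemma integrableOn_Ioi_one_rpow_neg_half_mul :
    IntegrableOn (fun t : ℝ => t ^ (-(1/2 : ℝ)) * ((t - 1) ^ (-(1/2 : ℝ)) - t ^ (-(1/2 : ℝ))))
      (Ioi 1) :=
  integrableOn_Ioi_deriv_of_nonneg
    continuousAt_two_mul_log_sqrt_add_sqrt_sub_one_sub_log.continuousWithinAt
    (fun _ ht => hasDerivAt_two_mul_log_sqrt_add_sqrt_sub_one_sub_log ht)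
    (fun _ ht => rpow_neg_half_mul_sub_rpow_neg_half_nonneg ht)
    tendsto_two_mul_log_sqrt_add_sqrt_sub_one_sub_log

lemma integral_Ioi_one_rpow_neg_half_mul :
    ∫ t in Ioi (1 : ℝ), t ^ (-(1/2 : ℝ)) * ((t - 1) ^ (-(1/2 : ℝ)) - t ^ (-(1/2 : ℝ)))
      = 2 * log 2 := by
  rw [integral_Ioi_of_hasDerivAt_of_nonneg
    continuousAt_two_mul_log_sqrt_add_sqrt_sub_one_sub_log.continuousWithinAt
    (fun _ ht => hasDerivAt_two_mul_log_sqrt_add_sqrt_sub_one_sub_log ht)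
    (fun _ ht => rpow_neg_half_mul_sub_rpow_neg_half_nonneg ht)
    tendsto_two_mul_log_sqrt_add_sqrt_sub_one_sub_log]
  simp

lemma integral_Ioo_comp_add_right {E : Type*} [NormedAddCommGroup E] [NormedSpace ℝ E]
    (f : ℝ → E) (a b c : ℝ) :
    ∫ x in Ioo (a - c) (b - c), f (x + c) = ∫ x in Ioo a b, f x := by
  rw [← preimage_add_const_Ioo]
  exact (measurePreserving_add_right volume c).setIntegral_preimage_emb
    (measurableEmbedding_addRight c) f _

lemma tendsto_integral_Ioo_sub_rpow_mul {h : ℝ → ℝ} {b r C : ℝ} (hb : 0 < b) (hr : -1 < r)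
    (hcont : ContinuousOn h (Ioo 0 b)) (hbound : ∀ u ∈ Ioo 0 b, |h u| ≤ C) :
    Tendsto (fun s => ∫ u in Ioo s b, (u - s) ^ r * h u) (𝓝[>] 0)
      (𝓝 (∫ u in Ioo 0 b, u ^ r * h u)) := by
  set F : ℝ → ℝ → ℝ := fun s => (Ioo 0 (b - s)).indicator fun v => v ^ r * h (v + s) with hF
  have hC : 0 ≤ C := (abs_nonneg _).trans (hbound (b / 2) ⟨by positivity, by linarith⟩)
  have hsmall : ∀ᶠ s in 𝓝[>] (0 : ℝ), s ∈ Ioo 0 b := Ioo_mem_nhdsGT hb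
  have hshift : ∀ s ∈ Ioo 0 b, ∫ u in Ioo s b, (u - s) ^ r * h u = ∫ v in Ioo 0 b, F s v := by
    intro s hs
    rw [hF, setIntegral_indicator measurableSet_Ioo,
      inter_eq_right.2 (Ioo_subset_Ioo_right (by linarith [hs.1])),
      ← integral_Ioo_comp_add_right _ s b s, sub_self]
    simp only [add_sub_cancel_right]
  refine Tendsto.congr' (EventuallyEq.symm ?_)
    (tendsto_integral_filter_of_dominated_convergence (F := F) (fun v => C * v ^ r) ?_ ?_ ?_ ?_)
  · filter_upwards [hsmall] with s hs using hshift s hs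
  · filter_upwards [hsmall] with s hs
    refine ((aestronglyMeasurable_indicator_iff measurableSet_Ioo).2 ?_).restrict
    refine ContinuousOn.aestronglyMeasurable ?_ measurableSet_Ioo
    refine (continuousOn_id.rpow_const fun v hv => Or.inl hv.1.ne').mul
      (hcont.comp (continuousOn_id.add continuousOn_const) fun v hv => ?_)
    exact ⟨by linarith [hv.1, hs.1], by linarith [hv.2]⟩
  · filter_upwards [hsmall] with s hs
    filter_upwards [ae_restrict_mem measurableSet_Ioo] with v hv
    by_cases hvs : v ∈ Ioo 0 (b - s)
    · simp only [hF]
      rw [indicator_of_mem hvs, norm_mul, norm_of_nonneg (rpow_nonneg hv.1.le _), mul_comm]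
      exact mul_le_mul_of_nonneg_right
        (hbound _ ⟨by linarith [hs.1, hv.1], by linarith [hvs.2]⟩) (rpow_nonneg hv.1.le _)
    · simp only [hF]
      rw [indicator_of_notMem hvs, norm_zero]
      exact mul_nonneg hC (rpow_nonneg hv.1.le _)
  · exact ((intervalIntegral.integrableOn_Ioo_rpow_iff hb).2 hr).const_mul C
  · filter_upwards [ae_restrict_mem measurableSet_Ioo] with v hv
    have hev : ∀ᶠ s in 𝓝[>] (0 : ℝ), F s v = v ^ r * h (v + s) := by
      filter_upwards [Ioo_mem_nhdsGT (sub_pos.2 hv.2)] with s hs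
      simp only [hF]
      exact indicator_of_mem (show v ∈ Ioo 0 (b - s) from ⟨hv.1, by linarith [hs.2]⟩) _
    refine Tendsto.congr' (EventuallyEq.symm hev) (tendsto_const_nhds.mul ?_)
    have hcv : ContinuousAt h v := hcont.continuousAt (isOpen_Ioo.mem_nhds hv)
    have := hcv.tendsto.comp ((continuous_const_add v).tendsto' 0 v (add_zero v))
    exact this.mono_left nhdsWithin_le_nhds

lemma integrableOn_sub_rpow_neg_half_mul_rpow_neg_half_mul {s : ℝ} (hs : 0 ≤ s) :
    IntegrableOn (fun u : ℝ => (u - s) ^ (-(1/2 : ℝ))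
      * (u ^ (-(1/2 : ℝ)) * ((1 - u) ^ (-(1/2 : ℝ)) - 1))) (Ioo s (1/2)) := by
  refine (integrableOn_sub_rpow_neg_half s (1/2)).mul_bdd (c := 1) (by fun_prop) ?_
  filter_upwards [ae_restrict_mem measurableSet_Ioo] with u hu
  exact abs_rpow_neg_half_mul_one_sub_rpow_neg_half_sub_one_le_one (hs.trans_lt hu.1) hu.2.le

lemma tendsto_integral_Ioo_sub_rpow_neg_half_mul_rpow_neg_half_mul :
    Tendsto (fun s => ∫ u in Ioo s (1/2), (u - s) ^ (-(1/2 : ℝ))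
        * (u ^ (-(1/2 : ℝ)) * ((1 - u) ^ (-(1/2 : ℝ)) - 1))) (𝓝[>] 0)
      (𝓝 (∫ t in Ioo (0 : ℝ) (1/2), t⁻¹ * ((1 - t) ^ (-(1/2 : ℝ)) - 1))) := by
  have hcont : ContinuousOn (fun u : ℝ => u ^ (-(1/2 : ℝ)) * ((1 - u) ^ (-(1/2 : ℝ)) - 1))
      (Ioo 0 (1/2)) := fun u hu => by
    have hu0 : u ≠ 0 := hu.1.ne'
    have hu1 : 1 - u ≠ 0 := ne_of_gt (by linarith [hu.2])
    have : ContinuousAt (fun u : ℝ => u ^ (-(1/2 : ℝ)) * ((1 - u) ^ (-(1/2 : ℝ)) - 1)) u := by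
      fun_prop (disch := simp [hu0, hu1])
    exact this.continuousWithinAt
  convert tendsto_integral_Ioo_sub_rpow_mul (r := -(1/2)) one_half_pos (by norm_num) hcont
    (fun u hu => abs_rpow_neg_half_mul_one_sub_rpow_neg_half_sub_one_le_one hu.1 hu.2.le)
    using 2
  refine setIntegral_congr_fun measurableSet_Ioo fun t ht => ?_
  rw [← mul_assoc, ← rpow_add ht.1]
  norm_num [rpow_neg_one]

lemma mul_sub_mul_one_sub_rpow_neg_half {s u : ℝ} (hs : 0 ≤ s) (hsu : s ≤ u) (hu : u ≤ 1) :
    (u * (u - s) * (1 - u)) ^ (-(1/2 : ℝ)) = (u * (u - s)) ^ (-(1/2 : ℝ))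
      + (u - s) ^ (-(1/2 : ℝ)) * (u ^ (-(1/2 : ℝ)) * ((1 - u) ^ (-(1/2 : ℝ)) - 1)) := by
  have hu0 : 0 ≤ u := hs.trans hsu
  rw [mul_rpow (mul_nonneg hu0 (sub_nonneg.2 hsu)) (sub_nonneg.2 hu),
    mul_rpow hu0 (sub_nonneg.2 hsu)]
  ring

lemma integral_Ioo_mul_sub_mul_one_sub_rpow_neg_half_eq {s : ℝ} (hs0 : 0 < s) (hs : s ≤ 1/2) :
    ∫ u in Ioo s (1/2), (u * (u - s) * (1 - u)) ^ (-(1/2 : ℝ))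
      = 2 * log (√(1/2) + √(1/2 - s)) - log s
        + ∫ u in Ioo s (1/2), (u - s) ^ (-(1/2 : ℝ))
          * (u ^ (-(1/2 : ℝ)) * ((1 - u) ^ (-(1/2 : ℝ)) - 1)) := by
  rw [← integral_Ioo_mul_sub_rpow_neg_half hs0 hs, ← integral_add
    (integrableOn_mul_sub_rpow_neg_half hs0)
    (integrableOn_sub_rpow_neg_half_mul_rpow_neg_half_mul hs0.le)]
  exact setIntegral_congr_fun measurableSet_Ioo fun u hu =>
    mul_sub_mul_one_sub_rpow_neg_half hs0.le hu.1.le (by linarith [hu.2])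

lemma tendsto_two_mul_log_sqrt_half_add_sqrt_half_sub :
    Tendsto (fun s => 2 * log (√(1/2) + √(1/2 - s))) (𝓝[>] 0) (𝓝 (log 2)) := by
  have hval : 2 * log (√(1/2) + √(1/2 - 0)) = log 2 := by
    have hsq : (√(1/2) + √(1/2 - 0)) ^ 2 = 2 := by
      rw [sub_zero, ← two_mul, mul_pow, sq_sqrt (by norm_num)]
      norm_num
    conv_rhs => rw [← hsq, log_pow]
    norm_num
  have hcont : ContinuousAt (fun s => 2 * log (√(1/2) + √(1/2 - s))) 0 := by
    fun_prop (disch := positivity)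
  exact hval ▸ hcont.tendsto.mono_left nhdsWithin_le_nhds

/-- lim_{s→0⁺} ( ∫_s^{1/2} (u(u−s)(1−u))^{−1/2} du + log s ) = c, where
c = ∫₀^{1/2} t^{−1}((1−t)^{−1/2}−1) dt + ∫₁^∞ t^{−1/2}((t−1)^{−1/2}−t^{−1/2}) dt − log 2;
both integrals defining c are finite. -/
theorem stmt_14 :
    IntegrableOn (fun t : ℝ => t⁻¹ * ((1 - t) ^ (-(1/2 : ℝ)) - 1))
      (Set.Ioo (0:ℝ) (1/2)) ∧
    IntegrableOn
      (fun t : ℝ => t ^ (-(1/2 : ℝ)) * ((t - 1) ^ (-(1/2 : ℝ)) - t ^ (-(1/2 : ℝ))))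
      (Set.Ioi 1) ∧
    Filter.Tendsto
      (fun s : ℝ =>
        (∫ u in Set.Ioo s (1/2 : ℝ), (u * (u - s) * (1 - u)) ^ (-(1/2 : ℝ)))
          + Real.log s)
      (nhdsWithin 0 (Set.Ioi 0))
      (nhds ((∫ t in Set.Ioo (0:ℝ) (1/2), t⁻¹ * ((1 - t) ^ (-(1/2 : ℝ)) - 1))
        + (∫ t in Set.Ioi (1:ℝ),
            t ^ (-(1/2 : ℝ)) * ((t - 1) ^ (-(1/2 : ℝ)) - t ^ (-(1/2 : ℝ))))
        - Real.log 2)) := by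
  refine ⟨integrableOn_inv_mul_one_sub_rpow_neg_half_sub_one,
    integrableOn_Ioi_one_rpow_neg_half_mul, ?_⟩
  rw [integral_Ioi_one_rpow_neg_half_mul, add_sub_assoc, show 2 * log 2 - log 2 = log 2 by ring]
  refine (tendsto_integral_Ioo_sub_rpow_neg_half_mul_rpow_neg_half_mul.add
    tendsto_two_mul_log_sqrt_half_add_sqrt_half_sub).congr' ?_
  filter_upwards [Ioo_mem_nhdsGT one_half_pos] with s hs
  rw [integral_Ioo_mul_sub_mul_one_sub_rpow_neg_half_eq hs.1 hs.2.le]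
  ring
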